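/- arXiv:1905.10882 — 2 statements merged into one kernel-verified Lean document; each statement's English description precedes it below -/
import Mathlib

section
/- Let f be an E-polynomial and D = min{i : pder^{(i+1)}(f) = 0}. Then distinct real zeros of f have distinct sign vectors (sign(pder^{(1)}(f)(ξ)), …, sign(pder^{(D)}(f)(ξ))); that is, the zeros of f are uniquely determined by the signs of the iterated pseudo-derivatives of f at them. -/
noncomputable section

/-- Evaluation of a bivariate integer polynomial (a polynomial in `Y` with coefficients
in `ℤ[X]`) at `(x, y) ∈ ℝ²`. -/
def ev (P : Polynomial (Polynomial ℤ)) (x y : ℝ) : ℝ :=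
  Polynomial.eval₂ (Polynomial.eval₂RingHom (Int.castRingHom ℝ) x) y P

/-- The E-polynomial `x ↦ F(x, e^{h(x)})`. -/
def epoly (h : Polynomial ℤ) (F : Polynomial (Polynomial ℤ)) (x : ℝ) : ℝ :=
  ev F x (Real.exp (Polynomial.eval₂ (Int.castRingHom ℝ) x h))

/-- Partial derivative with respect to `X` (the inner variable). -/
def dX (P : Polynomial (Polynomial ℤ)) : Polynomial (Polynomial ℤ) :=
  P.sum fun n c => Polynomial.C (Polynomial.derivative c) * Polynomial.X ^ n

/-- The polynomial `F̃ = ∂F/∂X + (∂F/∂Y)·h'(X)·Y` defining the derivative of the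
E-polynomial `x ↦ F(x, e^{h(x)})`. -/
def FtildeE (h : Polynomial ℤ) (F : Polynomial (Polynomial ℤ)) : Polynomial (Polynomial ℤ) :=
  dX F + Polynomial.derivative F * (Polynomial.C (Polynomial.derivative h) * Polynomial.X)

/-- The pseudo-derivative at the level of defining polynomials: it is `F̃` when
`deg_X F(X,0) > 0`; when `F(X,0)` is constant and `F̃ ≠ 0` it is `F̃` divided by the
largest power `Y^k` dividing it; and it is `0` when `F̃ = 0`. -/
def pderPoly (h : Polynomial ℤ) (F : Polynomial (Polynomial ℤ)) : Polynomial (Polynomial ℤ) :=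
  let Ft := FtildeE h F
  if Ft = 0 then 0
  else if 0 < (F.coeff 0).natDegree then Ft
  else Polynomial.divX^[Ft.natTrailingDegree] Ft

/-!
Each `pder^{(i+1)} f` is, up to a positive factor `e^{k h}`, the derivative of `pder^{(i)} f`.
Going down from `pder^{(D+1)} f = 0`: if `pder^{(i+1)} f` has constant sign on `[ξ₁, ξ₂]`,
then `pder^{(i)} f` is monotone there, so having the same sign at both ends it has that sign
throughout. For `i = 0` this makes `f` vanish on `[ξ₁, ξ₂]`, hence everywhere, by analyticity.
But a nonzero E-polynomial does not vanish identically: as `x → ∞` the coefficient of the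
highest power of `e^{h}` (if `h → +∞`) or of the lowest one (if `h → -∞`) dominates all other
terms.
-/

open Polynomial Filter Set Topology

theorem Real.monotone_sign : Monotone Real.sign := by
  intro a b hab
  rcases lt_trichotomy a 0 with ha | rfl | ha <;> rcases lt_trichotomy b 0 with hb | rfl | hb <;>
    simp only [Real.sign_of_neg, Real.sign_of_pos, Real.sign_zero, *] <;> linarith

theorem nonneg_or_nonpos_of_sign_eq {g : ℝ → ℝ} {S : Set ℝ} {a : ℝ}
    (hg : ∀ x ∈ S, Real.sign (g x) = Real.sign (g a)) :
    (∀ x ∈ S, 0 ≤ g x) ∨ ∀ x ∈ S, g x ≤ 0 := by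
  rcases le_total 0 (g a) with ha | ha
  · refine .inl fun x hx => not_lt.mp fun hneg => ?_
    have := Real.monotone_sign ha
    rw [Real.sign_zero, ← hg x hx, Real.sign_of_neg hneg] at this
    norm_num at this
  · refine .inr fun x hx => not_lt.mp fun hpos => ?_
    have := Real.monotone_sign ha
    rw [Real.sign_zero, ← hg x hx, Real.sign_of_pos hpos] at this
    norm_num at this

theorem sign_eqOn_Icc_of_monotoneOn_or_antitoneOn {f : ℝ → ℝ} {a b : ℝ}
    (hf : MonotoneOn f (Icc a b) ∨ AntitoneOn f (Icc a b))
    (hab : Real.sign (f a) = Real.sign (f b)) :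
    ∀ x ∈ Icc a b, Real.sign (f x) = Real.sign (f a) := by
  intro x hx
  have ha : a ∈ Icc a b := left_mem_Icc.2 (hx.1.trans hx.2)
  have hb : b ∈ Icc a b := right_mem_Icc.2 (hx.1.trans hx.2)
  rcases hf with hf | hf
  · exact le_antisymm (hab ▸ Real.monotone_sign (hf hx hb hx.2))
      (Real.monotone_sign (hf ha hx hx.1))
  · exact le_antisymm (Real.monotone_sign (hf ha hx hx.1))
      (hab ▸ Real.monotone_sign (hf hx hb hx.2))

theorem monotoneOn_or_antitoneOn_of_hasDerivAt {f g : ℝ → ℝ} {a b : ℝ}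
    (hf : ∀ x, ∃ c > 0, HasDerivAt f (c * g x) x)
    (hg : (∀ x ∈ Icc a b, 0 ≤ g x) ∨ ∀ x ∈ Icc a b, g x ≤ 0) :
    MonotoneOn f (Icc a b) ∨ AntitoneOn f (Icc a b) := by
  choose c hc hderiv using hf
  have hcont : ContinuousOn f (Icc a b) := fun x _ => (hderiv x).continuousAt.continuousWithinAt
  have hdiff : DifferentiableOn ℝ f (interior (Icc a b)) := fun x _ =>
    (hderiv x).differentiableAt.differentiableWithinAt
  rcases hg with hg | hg
  · refine .inl (monotoneOn_of_deriv_nonneg (convex_Icc a b) hcont hdiff fun x hx => ?_)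
    rw [(hderiv x).deriv]
    exact mul_nonneg (hc x).le (hg x (interior_subset hx))
  · refine .inr (antitoneOn_of_deriv_nonpos (convex_Icc a b) hcont hdiff fun x hx => ?_)
    rw [(hderiv x).deriv]
    exact mul_nonpos_of_nonneg_of_nonpos (hc x).le (hg x (interior_subset hx))

theorem sign_eqOn_Icc_of_hasDerivAt_chain (g : ℕ → ℝ → ℝ) {n : ℕ} {a b : ℝ}
    (hder : ∀ i < n, ∀ x, ∃ c > 0, HasDerivAt (g i) (c * g (i + 1) x) x)
    (hn : ∀ x ∈ Icc a b, g n x = 0)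
    (hsign : ∀ i ≤ n, Real.sign (g i a) = Real.sign (g i b)) :
    ∀ i ≤ n, ∀ x ∈ Icc a b, Real.sign (g i x) = Real.sign (g i a) := by
  intro i hi
  induction hi using Nat.decreasingInduction with
  | self => exact fun x hx => by rw [hn x hx, hn a (left_mem_Icc.2 (hx.1.trans hx.2))]
  | of_succ k hk ih =>
    exact sign_eqOn_Icc_of_monotoneOn_or_antitoneOn
      (monotoneOn_or_antitoneOn_of_hasDerivAt (hder k hk) (nonneg_or_nonpos_of_sign_eq ih))
      (hsign k hk.le)

theorem Polynomial.coeff_divX_iterate {R : Type*} [Semiring R] (P : R[X]) (k n : ℕ) :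
    (divX^[k] P).coeff n = P.coeff (n + k) := by
  induction k generalizing P with
  | zero => rfl
  | succ k ih => rw [Function.iterate_succ_apply, ih, coeff_divX, add_assoc]

theorem Polynomial.X_pow_mul_divX_iterate {R : Type*} [Semiring R] {P : R[X]} {k : ℕ}
    (hP : ∀ d < k, P.coeff d = 0) : X ^ k * divX^[k] P = P := by
  ext n
  rw [coeff_X_pow_mul', coeff_divX_iterate]
  split_ifs with hk
  · rw [Nat.sub_add_cancel hk]
  · exact (hP n (not_le.mp hk)).symm

theorem tendsto_eval_mul_exp_eval_atTop (p : ℝ[X]) {u : ℝ[X]} (hu : 0 < u.degree)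
    (hlc : u.leadingCoeff < 0) :
    Tendsto (fun x => p.eval x * Real.exp (u.eval x)) atTop (𝓝 0) := by
  have hdeg : p.degree ≤ ((-u) ^ p.natDegree).degree := by
    rw [degree_eq_natDegree (pow_ne_zero _ (neg_ne_zero.2 (ne_zero_of_degree_gt hu))),
      natDegree_pow, natDegree_neg]
    exact degree_le_natDegree.trans
      (by exact_mod_cast Nat.le_mul_of_pos_right _ (natDegree_pos_iff_degree_pos.2 hu))
  have hu_bot : Tendsto (fun x => -u.eval x) atTop atTop :=
    tendsto_neg_atBot_atTop.comp (tendsto_atBot_of_leadingCoeff_nonpos u hu hlc.le)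
  refine ((isBigO_atTop_of_degree_le _ _ hdeg).mul
    (Asymptotics.isBigO_refl _ _)).trans_tendsto ?_
  exact ((Real.tendsto_pow_mul_exp_neg_atTop_nhds_zero p.natDegree).comp hu_bot).congr
    fun x => by simp

theorem eq_zero_of_sum_eval_mul_exp_pow_eq_zero {p : ℕ → ℝ[X]} {q : ℝ[X]} (hq : 0 < q.degree)
    {s : Finset ℕ} {m : ℕ} (hm : m ∈ s)
    (hdom : ∀ n ∈ s, n ≠ m → p n ≠ 0 → ((n : ℝ) - m) * q.leadingCoeff < 0)
    (hsum : ∀ x, ∑ n ∈ s, (p n).eval x * Real.exp (q.eval x) ^ n = 0) : p m = 0 := by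
  set term : ℕ → ℝ → ℝ := fun n x => (p n).eval x * Real.exp (((n : ℝ) - m) * q.eval x)
  have hterm : ∀ n ∈ s.erase m, Tendsto (term n) atTop (𝓝 0) := by
    intro n hn
    by_cases hpn : p n = 0
    · simp [term, hpn]
    have hnm : ((n : ℝ) - m) ≠ 0 := sub_ne_zero.2 (by exact_mod_cast Finset.ne_of_mem_erase hn)
    refine (tendsto_eval_mul_exp_eval_atTop (p n) (u := C ((n : ℝ) - m) * q)
      (by rwa [degree_C_mul hnm]) ?_).congr fun x => by simp [term]
    rw [leadingCoeff_mul, leadingCoeff_C]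
    exact hdom n (Finset.mem_of_mem_erase hn) (Finset.ne_of_mem_erase hn) hpn
  have hsplit : ∀ x, (p m).eval x = -∑ n ∈ s.erase m, term n x := by
    intro x
    have hscaled : ∑ n ∈ s, term n x = 0 := by
      have hexp : ∀ n : ℕ, Real.exp (((n : ℝ) - m) * q.eval x)
          = Real.exp (q.eval x) ^ n * Real.exp (-(m * q.eval x)) := by
        intro n
        rw [← Real.exp_nat_mul, ← Real.exp_add]
        ring_nf
      simp only [term, hexp, ← mul_assoc, ← Finset.sum_mul, hsum x, zero_mul]
    rw [← Finset.add_sum_erase s _ hm] at hscaled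
    simp only [term, sub_self, zero_mul, Real.exp_zero, mul_one] at hscaled
    linarith
  have hlim : Tendsto (fun x => (p m).eval x) atTop (𝓝 0) := by
    simpa [hsplit] using (tendsto_finsetSum _ hterm).neg
  exact leadingCoeff_eq_zero.1 ((Polynomial.tendsto_nhds_iff _).1 hlim).1

theorem epoly_eq_sum_range (h : ℤ[X]) {F : ℤ[X][X]} {N : ℕ} (hN : F.natDegree < N) (x : ℝ) :
    epoly h F x = ∑ i ∈ Finset.range N, aeval x (F.coeff i) * Real.exp (aeval x h) ^ i :=
  eval₂_eq_sum_range' _ hN _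

theorem epoly_ne_zero {h : ℤ[X]} (hh : 0 < h.natDegree) {F : ℤ[X][X]} (hF : F ≠ 0) :
    epoly h F ≠ 0 := by
  intro hzero
  have hinj : Function.Injective (algebraMap ℤ ℝ) := RingHom.injective_int _
  set p : ℕ → ℝ[X] := fun n => (F.coeff n).map (algebraMap ℤ ℝ)
  set q : ℝ[X] := h.map (algebraMap ℤ ℝ)
  have hq : 0 < q.degree := by
    rw [degree_map_eq_of_injective hinj]
    exact natDegree_pos_iff_degree_pos.1 hh
  have hlc : q.leadingCoeff = h.leadingCoeff := leadingCoeff_map_of_injective hinj _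
  have hp : ∀ n, p n = 0 ↔ F.coeff n = 0 := fun n => Polynomial.map_eq_zero_iff hinj
  have hsum : ∀ x, ∑ n ∈ Finset.range (F.natDegree + 1),
      (p n).eval x * Real.exp (q.eval x) ^ n = 0 := fun x => by
    simpa only [p, q, eval_map_algebraMap, epoly_eq_sum_range h (Nat.lt_succ_self _),
      Pi.zero_apply] using congrFun hzero x
  rcases (leadingCoeff_ne_zero.2 (ne_zero_of_natDegree_gt hh)).lt_or_gt with hneg | hpos
  · refine trailingCoeff_nonzero_iff_nonzero.2 hF ((hp _).1
      (eq_zero_of_sum_eval_mul_exp_pow_eq_zero hq (m := F.natTrailingDegree)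
        (Finset.mem_range.2 (Nat.lt_succ_of_le (natTrailingDegree_le_natDegree F)))
        (fun n _ hnm hpn => ?_) hsum))
    have : F.natTrailingDegree < n :=
      (natTrailingDegree_le_of_ne_zero (mt (hp n).2 hpn)).lt_of_ne' hnm
    rw [hlc]
    exact mul_neg_of_pos_of_neg (sub_pos.2 (by exact_mod_cast this)) (by exact_mod_cast hneg)
  · refine leadingCoeff_ne_zero.2 hF ((hp _).1
      (eq_zero_of_sum_eval_mul_exp_pow_eq_zero hq (m := F.natDegree)
        (Finset.self_mem_range_succ _) (fun n hn hnm _ => ?_) hsum))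
    have : n < F.natDegree := (Nat.lt_succ_iff.1 (Finset.mem_range.1 hn)).lt_of_ne hnm
    rw [hlc]
    exact mul_neg_of_neg_of_pos (sub_neg.2 (by exact_mod_cast this)) (by exact_mod_cast hpos)

theorem analyticOnNhd_epoly (h : ℤ[X]) (F : ℤ[X][X]) : AnalyticOnNhd ℝ (epoly h F) univ := by
  intro x _
  rw [funext (epoly_eq_sum_range h (Nat.lt_succ_self F.natDegree))]
  exact Finset.analyticAt_fun_sum _ fun i _ => (analyticAt_id.aeval_polynomial _).mul
    ((analyticAt_rexp.comp (analyticAt_id.aeval_polynomial h)).pow i)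

theorem epoly_eq_zero_of_eqOn_Icc (h : ℤ[X]) (F : ℤ[X][X]) {a b : ℝ} (hab : a < b)
    (hz : EqOn (epoly h F) 0 (Icc a b)) : epoly h F = 0 :=
  funext fun y => (analyticOnNhd_epoly h F).eqOn_zero_of_preconnected_of_eventuallyEq_zero
    isPreconnected_univ (mem_univ ((a + b) / 2))
    (eventuallyEq_of_mem (Ioo_mem_nhds (by linarith) (by linarith))
      fun x hx => hz (Ioo_subset_Icc_self hx)) (mem_univ y)

theorem coeff_FtildeE (h : ℤ[X]) (F : ℤ[X][X]) (i : ℕ) :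
    (FtildeE h F).coeff i = derivative (F.coeff i) + F.coeff i * derivative h * (i : ℤ[X]) := by
  have hdX : (dX F).coeff i = derivative (F.coeff i) := by
    simp only [dX, Polynomial.sum, finsetSum_coeff, C_mul_X_pow_eq_monomial, coeff_monomial,
      Finset.sum_ite_eq', mem_support_iff]
    split_ifs with hi
    · rfl
    · rw [not_not.1 hi, map_zero]
  rw [FtildeE, coeff_add, hdX, ← mul_assoc]
  cases i with
  | zero => simp
  | succ k =>
    rw [coeff_mul_X, coeff_mul_C, coeff_derivative]
    push_cast
    ring

theorem natDegree_FtildeE_le (h : ℤ[X]) (F : ℤ[X][X]) :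
    (FtildeE h F).natDegree ≤ F.natDegree :=
  natDegree_le_iff_coeff_eq_zero.2 fun m hm => by
    rw [coeff_FtildeE, coeff_eq_zero_of_natDegree_lt hm]
    simp

theorem hasDerivAt_epoly (h : ℤ[X]) (F : ℤ[X][X]) (x : ℝ) :
    HasDerivAt (epoly h F) (epoly h (FtildeE h F) x) x := by
  rw [funext (epoly_eq_sum_range h (Nat.lt_succ_self F.natDegree)),
    epoly_eq_sum_range h (Nat.lt_succ_of_le (natDegree_FtildeE_le h F))]
  refine HasDerivAt.fun_sum fun i _ => ?_
  refine ((Polynomial.hasDerivAt_aeval (F.coeff i) x).mul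
    (((Polynomial.hasDerivAt_aeval h x).exp).fun_pow i)).congr_deriv ?_
  rw [coeff_FtildeE]
  cases i with
  | zero => simp
  | succ k =>
    simp only [map_add, map_mul, map_natCast, Nat.add_sub_cancel, pow_succ]
    ring

@[simp]
theorem epoly_zero (h : ℤ[X]) (x : ℝ) : epoly h 0 x = 0 := by
  simp [epoly, ev]

theorem exists_epoly_FtildeE_eq_pow_mul (h : ℤ[X]) (G : ℤ[X][X]) :
    ∃ k : ℕ, ∀ x,
      epoly h (FtildeE h G) x = Real.exp (aeval x h) ^ k * epoly h (pderPoly h G) x := by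
  dsimp only [pderPoly]
  split_ifs with h0
  · exact ⟨0, fun x => by simp [h0]⟩
  · exact ⟨0, fun x => by simp⟩
  · refine ⟨(FtildeE h G).natTrailingDegree, fun x => ?_⟩
    conv_lhs => rw [← X_pow_mul_divX_iterate (P := FtildeE h G)
      fun _ => coeff_eq_zero_of_lt_natTrailingDegree]
    simp [epoly, ev, eval₂_mul, aeval_def]

theorem exists_pos_hasDerivAt_epoly_pderPoly (h : ℤ[X]) (G : ℤ[X][X]) (x : ℝ) :
    ∃ c > 0, HasDerivAt (epoly h G) (c * epoly h (pderPoly h G) x) x := by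
  obtain ⟨k, hk⟩ := exists_epoly_FtildeE_eq_pow_mul h G
  exact ⟨_, pow_pos (Real.exp_pos _) k, hk x ▸ hasDerivAt_epoly h G x⟩

theorem thom_encoding_unique_general (h : Polynomial ℤ) (hh : 0 < h.natDegree)
    (F : Polynomial (Polynomial ℤ)) (hF : F ≠ 0) (D : ℕ)
    (hD : (pderPoly h)^[D + 1] F = 0)
    (ξ₁ ξ₂ : ℝ) (h1 : epoly h F ξ₁ = 0) (h2 : epoly h F ξ₂ = 0)
    (hsign : ∀ i, 1 ≤ i → i ≤ D →
      Real.sign (epoly h ((pderPoly h)^[i] F) ξ₁) =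
        Real.sign (epoly h ((pderPoly h)^[i] F) ξ₂)) :
    ξ₁ = ξ₂ := by
  by_contra hne
  wlog hlt : ξ₁ < ξ₂ generalizing ξ₁ ξ₂
  · exact this ξ₂ ξ₁ h2 h1 (fun i hi hiD => (hsign i hi hiD).symm) (Ne.symm hne)
      ((not_lt.1 hlt).lt_of_ne' hne)
  set g : ℕ → ℝ → ℝ := fun i => epoly h ((pderPoly h)^[i] F)
  have hg_top : ∀ x, g (D + 1) x = 0 := fun x => by simp [g, hD]
  have hsign_all : ∀ i ≤ D + 1, Real.sign (g i ξ₁) = Real.sign (g i ξ₂) := by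
    rintro (_ | i) hi
    · simp [g, h1, h2]
    · by_cases hiD : i + 1 ≤ D
      · exact hsign (i + 1) le_add_self hiD
      · obtain rfl : i = D := by omega
        rw [hg_top, hg_top]
  have hchain := sign_eqOn_Icc_of_hasDerivAt_chain g
    (fun i _ x => by simpa only [g, Function.iterate_succ_apply']
      using exists_pos_hasDerivAt_epoly_pderPoly h _ x)
    (fun x _ => hg_top x) hsign_all
  have hzero : EqOn (epoly h F) 0 (Icc ξ₁ ξ₂) := fun x hx => by
    simpa [g, h1, Real.sign_zero, Real.sign_eq_zero_iff] using hchain 0 (Nat.zero_le _) x hx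
  exact epoly_ne_zero hh hF (epoly_eq_zero_of_eqOn_Icc h F hlt hzero)

theorem thom_encoding_unique (h : Polynomial ℤ) (hh : 0 < h.natDegree)
    (F : Polynomial (Polynomial ℤ)) (hF : F ≠ 0) (D : ℕ)
    (hD : (pderPoly h)^[D + 1] F = 0)
    (hDmin : ∀ i < D, (pderPoly h)^[i + 1] F ≠ 0)
    (ξ₁ ξ₂ : ℝ) (h1 : epoly h F ξ₁ = 0) (h2 : epoly h F ξ₂ = 0)
    (hsign : ∀ i, 1 ≤ i → i ≤ D →
      Real.sign (epoly h ((pderPoly h)^[i] F) ξ₁) =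
        Real.sign (epoly h ((pderPoly h)^[i] F) ξ₂)) :
    ξ₁ = ξ₂ :=
  thom_encoding_unique_general h hh F hF D hD ξ₁ ξ₂ h1 h2 hsign

end
end

section
/- Let f, g : (a,b) → ℝ be continuous, (f₀,…,f_N) a Sturm sequence for f with respect to g, and t ∈ (a,b) with f₀(t) ≠ 0. Then there exists ε > 0 such that the sign-variation count v(x) of (f₀(x),…,f_N(x)) is constant equal to v(t) on (t−ε, t+ε). -/
/-! Sign variations can only change where some `F i` vanishes. Near `t`, every `F i` with
`F i t ≠ 0` keeps its sign, and an interior zero `F i t = 0` sits between neighbours of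
opposite signs, which contribute exactly one variation whatever the sign of `F i x`.
Since `F 0 t ≠ 0` and `F N t ≠ 0`, no zero occurs at the ends. -/

open Set

noncomputable section

/-- Number of sign changes between consecutive entries of a list of reals. -/
def signChanges : List ℝ → ℕ
  | a :: b :: t => (if a * b < 0 then 1 else 0) + signChanges (b :: t)
  | _ => 0

/-- Number of sign variations of a tuple of reals, after removing zero entries. -/
def signVar (l : List ℝ) : ℕ :=
  signChanges (l.filter (fun x => decide (x ≠ 0)))

/-- `v N F x` is the number of sign variations in `(F 0 x, …, F N x)` after removing zeros. -/
def v (N : ℕ) (F : ℕ → ℝ → ℝ) (x : ℝ) : ℕ :=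
  signVar ((List.range (N + 1)).map (fun i => F i x))

/-- `(F 0, …, F N)` is a Sturm sequence in `(a,b)` for `f` with respect to `g`. -/
def SturmSeq (a b : ℝ) (f g : ℝ → ℝ) (N : ℕ) (F : ℕ → ℝ → ℝ) : Prop :=
  (∀ i ≤ N, ContinuousOn (F i) (Ioo a b)) ∧
  (∀ y ∈ Ioo a b, (F 0 y = 0 ↔ (f y = 0 ∧ g y ≠ 0))) ∧
  (∀ y ∈ Ioo a b, F 0 y = 0 →
    ∃ ε > 0, (∀ x ∈ Ioo (y - ε) (y + ε), F 1 x ≠ 0) ∧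
      (g y > 0 →
        (∀ x ∈ Ioo (y - ε) y, F 0 x * F 1 x < 0) ∧
        (∀ x ∈ Ioo y (y + ε), F 0 x * F 1 x > 0)) ∧
      (g y < 0 →
        (∀ x ∈ Ioo (y - ε) y, F 0 x * F 1 x > 0) ∧
        (∀ x ∈ Ioo y (y + ε), F 0 x * F 1 x < 0))) ∧
  (∀ y ∈ Ioo a b, ∀ i, 1 ≤ i → i ≤ N - 1 → F i y = 0 → F (i - 1) y * F (i + 1) y < 0) ∧
  (∀ y ∈ Ioo a b, F N y ≠ 0)

open Filter Topology

lemma mul_neg_iff_of_mul_pos {a a' b b' : ℝ} (ha : 0 < a * a') (hb : 0 < b * b') :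
    a * b < 0 ↔ a' * b' < 0 := by
  have h : 0 < (a * b) * (a' * b') := by nlinarith
  rcases mul_pos_iff.mp h with ⟨h1, h2⟩ | ⟨h1, h2⟩ <;> constructor <;> intro <;> linarith

lemma signVar_singleton (a : ℝ) : signVar [a] = 0 := by
  by_cases ha : a = 0 <;> simp [signVar, ha, signChanges]

lemma signVar_cons_cons {a b : ℝ} (ha : a ≠ 0) (hb : b ≠ 0) (l : List ℝ) :
    signVar (a :: b :: l) = (if a * b < 0 then 1 else 0) + signVar (b :: l) := by
  simp [signVar, ha, hb, signChanges]

lemma signVar_cons_zero (a : ℝ) (l : List ℝ) : signVar (a :: 0 :: l) = signVar (a :: l) := by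
  simp [signVar, List.filter_cons]

lemma signVar_cons_cons_cons_of_mul_neg {a c : ℝ} (b : ℝ) (l : List ℝ) (hac : a * c < 0) :
    signVar (a :: b :: c :: l) = 1 + signVar (c :: l) := by
  have ha : a ≠ 0 := by rintro rfl; simp at hac
  have hc : c ≠ 0 := by rintro rfl; simp at hac
  by_cases hb : b = 0
  · rw [hb, signVar_cons_zero, signVar_cons_cons ha hc, if_pos hac]
  · rw [signVar_cons_cons ha hb, signVar_cons_cons hb hc, ← add_assoc]
    -- `(a * b) * (b * c) = b ^ 2 * (a * c) < 0`: exactly one of the two products is negative.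
    have hb2 : 0 < b * b := mul_self_pos.mpr hb
    congr 1
    split_ifs with hab hbc hbc
    · nlinarith
    · rfl
    · rfl
    · nlinarith

theorem signVar_map_range_eq_of_sign_agree {N : ℕ} {p q : ℕ → ℝ}
    (hsign : ∀ i ≤ N, p i ≠ 0 → 0 < p i * q i)
    (hzero : ∀ i, i + 2 ≤ N → p (i + 1) = 0 → p i * p (i + 2) < 0)
    (h0 : p 0 ≠ 0) (hN : p N ≠ 0) :
    signVar ((List.range (N + 1)).map q) = signVar ((List.range (N + 1)).map p) := by
  induction N using Nat.strong_induction_on generalizing p q with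
  | _ N ih =>
    rcases N with _ | n
    · simp [signVar_singleton]
    have hp0 : 0 < p 0 * q 0 := hsign 0 (Nat.zero_le _) h0
    by_cases h1 : p 1 = 0
    · rcases n with _ | n
      · exact absurd h1 hN
      have hp02 : p 0 * p 2 < 0 := hzero 0 (by omega) h1
      have h2 : p 2 ≠ 0 := right_ne_zero_of_mul hp02.ne
      have hp2 : 0 < p 2 * q 2 := hsign 2 (by omega) h2
      have htail := ih n (by omega) (p := fun i => p (i + 2)) (q := fun i => q (i + 2))
        (fun i hi => hsign (i + 2) (by omega)) (fun i hi => hzero (i + 2) (by omega)) h2 hN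
      simp only [List.range_succ_eq_map, List.map_cons, List.map_map] at htail ⊢
      rw [signVar_cons_cons_cons_of_mul_neg _ _ hp02, signVar_cons_cons_cons_of_mul_neg _ _
        ((mul_neg_iff_of_mul_pos hp0 hp2).mp hp02)]
      exact congrArg (1 + ·) htail
    · have hp1 : 0 < p 1 * q 1 := hsign 1 (by omega) h1
      have htail := ih n (by omega) (p := fun i => p (i + 1)) (q := fun i => q (i + 1))
        (fun i hi => hsign (i + 1) (by omega)) (fun i hi => hzero (i + 1) (by omega)) h1 hN
      simp only [List.range_succ_eq_map, List.map_cons, List.map_map, Function.comp_def,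
        Nat.succ_eq_add_one, zero_add] at htail ⊢
      rw [signVar_cons_cons h0 h1, signVar_cons_cons (right_ne_zero_of_mul hp0.ne')
        (right_ne_zero_of_mul hp1.ne'), htail, if_congr (mul_neg_iff_of_mul_pos hp0 hp1) rfl rfl]

lemma eventually_mul_pos_of_continuousAt {α : Type*} [TopologicalSpace α] {f : α → ℝ} {t : α}
    (hf : ContinuousAt f t) (ht : f t ≠ 0) : ∀ᶠ x in 𝓝 t, 0 < f t * f x :=
  (continuousAt_const.mul hf).eventually_const_lt (mul_self_pos.mpr ht)

theorem variation_locally_constant_general {a b : ℝ} {N : ℕ} {f g : ℝ → ℝ} {F : ℕ → ℝ → ℝ}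
    (hSturm : SturmSeq a b f g N F)
    {t : ℝ} (ht : t ∈ Ioo a b) (h0 : F 0 t ≠ 0) :
    ∃ ε > 0, Ioo (t - ε) (t + ε) ⊆ Ioo a b ∧
      ∀ x ∈ Ioo (t - ε) (t + ε), v N F x = v N F t := by
  obtain ⟨hcont, -, -, hzero, hlast⟩ := hSturm
  have hnear : ∀ᶠ x in 𝓝 t, x ∈ Ioo a b ∧ ∀ i ∈ {i | i ≤ N}, F i t ≠ 0 → 0 < F i t * F i x := by
    refine (isOpen_Ioo.eventually_mem ht).and ((eventually_all_finite (finite_le_nat N)).mpr ?_)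
    intro i hi
    by_cases hFi : F i t = 0
    · exact .of_forall fun _ h => absurd hFi h
    · filter_upwards [eventually_mul_pos_of_continuousAt
        ((hcont i hi).continuousAt (Ioo_mem_nhds ht.1 ht.2)) hFi] with x hx using fun _ => hx
  obtain ⟨ε, hε, hball⟩ := Metric.eventually_nhds_iff_ball.mp hnear
  rw [Real.ball_eq_Ioo] at hball
  refine ⟨ε, hε, fun x hx => (hball x hx).1, fun x hx => ?_⟩
  exact signVar_map_range_eq_of_sign_agree (hball x hx).2
    (fun i hi hz => by simpa using hzero t ht (i + 1) (by omega) (by omega) hz) h0 (hlast t ht)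

theorem variation_locally_constant {a b : ℝ} {N : ℕ} {f g : ℝ → ℝ} {F : ℕ → ℝ → ℝ}
    (hf : ContinuousOn f (Ioo a b)) (hg : ContinuousOn g (Ioo a b))
    (hSturm : SturmSeq a b f g N F)
    {t : ℝ} (ht : t ∈ Ioo a b) (h0 : F 0 t ≠ 0) :
    ∃ ε > 0, Ioo (t - ε) (t + ε) ⊆ Ioo a b ∧
      ∀ x ∈ Ioo (t - ε) (t + ε), v N F x = v N F t :=
  variation_locally_constant_general hSturm ht h0

end
end
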